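/- Let (z, t) ∈ ℂ × ℝ satisfy |z|⁴ + t² = 1 and d((z,t), (1,0)) = 1, where d is the Korányi distance. Then |z|² ≥ 5/2 − √6. -/

import Mathlib

open Complex Real

/-- The Korányi (Heisenberg) distance on ℂ × ℝ. -/
noncomputable def kd (p q : ℂ × ℝ) : ℝ :=
  (‖p.1 - q.1‖ ^ 4 +
    (p.2 - q.2 + 2 * (p.1 * (starRingEnd ℂ) q.1).im) ^ 2) ^ ((1 : ℝ) / 4)

/-!
Subtracting the equations `|z|⁴ + t² = 1` and `kd (z, t) (1, 0) ^ 4 = 1` of the two spheres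
leaves the linear condition `4 Re (z w) = 6 s + 1`, where `s = |z|²` and `w = s + 1 + i t`.
On the unit sphere `|w|² = (s + 1)² + t² = 2 s + 2`, so Cauchy–Schwarz gives
`(6 s + 1)² ≤ 16 s (2 s + 2)`, i.e. `4 s² - 20 s + 1 ≤ 0`, whose smaller root is `5/2 - √6`.
-/

theorem kd_pow_four (p q : ℂ × ℝ) :
    kd p q ^ 4 = ‖p.1 - q.1‖ ^ 4 + (p.2 - q.2 + 2 * (p.1 * (starRingEnd ℂ) q.1).im) ^ 2 := by
  rw [kd, ← Real.rpow_natCast, ← Real.rpow_mul (by positivity)]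
  norm_num

theorem kd_one_pow_four (z : ℂ) (t : ℝ) :
    kd (z, t) (1, 0) ^ 4 =
      ‖z‖ ^ 4 + t ^ 2 + 6 * ‖z‖ ^ 2 + 1 - 4 * (z * (‖z‖ ^ 2 + 1 + t * I)).re := by
  have hz : ‖z‖ ^ 2 = z.re ^ 2 + z.im ^ 2 := by rw [Complex.sq_norm, normSq_apply]; ring
  have hz1 : ‖z - 1‖ ^ 2 = (z.re - 1) ^ 2 + z.im ^ 2 := by
    rw [Complex.sq_norm, normSq_apply]; simp only [sub_re, sub_im, one_re, one_im]; ring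
  have h4 : ∀ w : ℂ, ‖w‖ ^ 4 = (‖w‖ ^ 2) ^ 2 := fun w => by ring
  rw [kd_pow_four, h4, h4, hz, hz1]
  simp only [map_one, mul_one, sub_zero, mul_re, mul_im, add_re, add_im, ofReal_re, ofReal_im,
    I_re, I_im, one_re, one_im]
  norm_cast
  rw [hz]
  ring

theorem five_halves_sub_sqrt_six_le {s : ℝ} (h : (6 * s + 1) ^ 2 ≤ 32 * s * (s + 1)) :
    5 / 2 - √6 ≤ s := by
  nlinarith [Real.sq_sqrt (show (0 : ℝ) ≤ 6 by norm_num), Real.sqrt_nonneg 6]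

theorem normSq_lower_bound_on_curve (z : ℂ) (t : ℝ)
    (hsph : ‖z‖ ^ 4 + t ^ 2 = 1)
    (hd : kd (z, t) ((1 : ℂ), (0 : ℝ)) = 1) :
    5 / 2 - Real.sqrt 6 ≤ ‖z‖ ^ 2 := by
  set w : ℂ := ‖z‖ ^ 2 + 1 + t * I
  have hre : 4 * (z * w).re = 6 * ‖z‖ ^ 2 + 1 := by
    have hgauge := kd_one_pow_four z t
    rw [hd] at hgauge
    linarith
  have hw : ‖w‖ ^ 2 = 2 * ‖z‖ ^ 2 + 2 := by
    have hw_cast : w = ((‖z‖ ^ 2 + 1 : ℝ) : ℂ) + t * I := by push_cast; rfl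
    rw [Complex.sq_norm, hw_cast, normSq_add_mul_I]
    linear_combination hsph
  apply five_halves_sub_sqrt_six_le
  calc (6 * ‖z‖ ^ 2 + 1) ^ 2 = 16 * |(z * w).re| ^ 2 := by rw [sq_abs, ← hre]; ring
    _ ≤ 16 * ‖z * w‖ ^ 2 := by gcongr; exact abs_re_le_norm _
    _ = 32 * ‖z‖ ^ 2 * (‖z‖ ^ 2 + 1) := by rw [norm_mul, mul_pow, hw]; ring
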